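/- Let L ⊆ Q be a dense extension of Lie algebras, where Q is a multiplicatively semiprime algebra of quotients of L. Then for every essential ideal I of L, the extension I ⊆ Q is dense. -/

import Mathlib

section
variable (Φ : Type*) [CommRing Φ] (Q : Type*) [LieRing Q] [LieAlgebra Φ Q]

/-- The multiplication algebra `M(Q)`. -/
def MQ : Subalgebra Φ (Module.End Φ Q) :=
  Algebra.adjoin Φ (Set.range (LieAlgebra.ad Φ Q))

/-- Density of `S` in `Q`. -/
def IsDenseExtension (S : Set Q) : Prop :=
  ∀ μ ∈ MQ Φ Q, (∀ x ∈ S, μ x = 0) → μ = 0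

/-- `I` is an ideal of the subalgebra with carrier `S`. -/
def IsIdealOf (S : Set Q) (I : Submodule Φ Q) : Prop :=
  (I : Set Q) ⊆ S ∧ ∀ x ∈ S, ∀ y ∈ I, ⁅x, y⁆ ∈ I

/-- The annihilator of `I` in `S` is zero. -/
def AnnZero (S : Set Q) (I : Submodule Φ Q) : Prop :=
  ∀ a ∈ S, (∀ y ∈ I, ⁅a, y⁆ = (0 : Q)) → a = 0

/-- `Q` is an algebra of quotients of the subalgebra with carrier `S`. -/
def IsAlgebraOfQuotients (S : Set Q) : Prop :=
  ∀ q : Q, q ≠ 0 → ∃ I : Submodule Φ Q, IsIdealOf Φ Q S I ∧ AnnZero Φ Q S I ∧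
    (∃ y ∈ I, ⁅y, q⁆ ≠ 0) ∧ ∀ y ∈ I, ⁅y, q⁆ ∈ S

/-- `I` is an essential ideal of the subalgebra with carrier `S`. -/
def IsEssentialIdealOf (S : Set Q) (I : Submodule Φ Q) : Prop :=
  IsIdealOf Φ Q S I ∧
    ∀ J : Submodule Φ Q, IsIdealOf Φ Q S J → J ≠ ⊥ → ∃ x ∈ I, x ∈ J ∧ x ≠ 0

/-- Semiprimeness of an associative subalgebra of `End(Q)`. -/
def AssocSemiprimeOn (S : Set (Module.End Φ Q)) : Prop :=
  ∀ J : Submodule Φ (Module.End Φ Q),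
    ((J : Set (Module.End Φ Q)) ⊆ S ∧ ∀ a ∈ S, ∀ x ∈ J, a * x ∈ J ∧ x * a ∈ J) →
    (∀ x ∈ J, ∀ y ∈ J, x * y = 0) → J = ⊥

/-- `Q` is multiplicatively semiprime. -/
def MultSemiprime : Prop :=
  (∀ I : LieIdeal Φ Q, ⁅I, I⁆ = ⊥ → I = ⊥) ∧
    AssocSemiprimeOn Φ Q (MQ Φ Q : Set (Module.End Φ Q))

end


/-!
Let `N` be the Lie ideal of `Q` generated by `I`. Density of `L` forces every `μ ∈ M(Q)` that
vanishes on `I` to vanish on `N`. Lie semiprimeness gives `N ∩ Ann_Q(N) = 0`, which together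
with essentiality of `I` yields `Ann_L(I) = 0`. Semiprimeness of `M(Q)` kills the square-zero
ideal `{τ ∈ M(Q) : τ(N) = 0, τ(Q) ⊆ N}`, which contains `ad n ∘ μ` for `n ∈ N`; hence
`μ(Q) ⊆ Ann_Q(N)`. If `μ a ≠ 0` for some `a ∈ L`, the quotient property yields `y` with
`0 ≠ [y, μ a] ∈ L ∩ Ann_Q(N) ⊆ Ann_L(I)`, which is absurd. So `μ` vanishes on `L`, and
`μ = 0` by density.
-/
namespace MQ

variable {Φ : Type*} [CommRing Φ] {Q : Type*} [LieRing Q] [LieAlgebra Φ Q]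

lemma ad_mem (x : Q) : (LieAlgebra.ad Φ Q x : Module.End Φ Q) ∈ MQ Φ Q :=
  Algebra.subset_adjoin ⟨x, rfl⟩

lemma apply_mem_lieIdeal (N : LieIdeal Φ Q) {a : Module.End Φ Q} (ha : a ∈ MQ Φ Q)
    {n : Q} (hn : n ∈ N) : a n ∈ N := by
  induction ha using Algebra.adjoin_induction generalizing n with
  | mem a h =>
    obtain ⟨x, rfl⟩ := h
    exact N.lie_mem hn
  | algebraMap r => simpa [Module.algebraMap_end_apply] using N.smul_mem r hn
  | add a b _ _ iha ihb => exact N.add_mem (iha hn) (ihb hn)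
  | mul a b _ _ iha ihb => exact iha (ihb hn)

lemma eq_zero_of_forall_apply_eq_zero_of_forall_apply_mem
    (hsp : AssocSemiprimeOn Φ Q (MQ Φ Q)) (N : LieIdeal Φ Q) {ν : Module.End Φ Q}
    (hν : ν ∈ MQ Φ Q) (hνN : ∀ n ∈ N, ν n = 0) (hνQ : ∀ q, ν q ∈ N) : ν = 0 := by
  let J : Submodule Φ (Module.End Φ Q) :=
    { carrier := {τ | τ ∈ MQ Φ Q ∧ (∀ n ∈ N, τ n = 0) ∧ ∀ q, τ q ∈ N}
      add_mem' := fun ha hb => ⟨add_mem ha.1 hb.1,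
        fun n hn => by rw [LinearMap.add_apply, ha.2.1 n hn, hb.2.1 n hn, add_zero],
        fun q => N.add_mem (ha.2.2 q) (hb.2.2 q)⟩
      zero_mem' := ⟨zero_mem _, fun _ _ => rfl, fun _ => N.zero_mem⟩
      smul_mem' := fun c τ hτ => ⟨Subalgebra.smul_mem _ hτ.1 c,
        fun n hn => by rw [LinearMap.smul_apply, hτ.2.1 n hn, smul_zero],
        fun q => N.smul_mem c (hτ.2.2 q)⟩ }
  have hJ_ideal : ∀ a ∈ MQ Φ Q, ∀ τ ∈ J, a * τ ∈ J ∧ τ * a ∈ J := by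
    intro a ha τ hτ
    refine ⟨⟨mul_mem ha hτ.1, fun n hn => ?_, fun q => apply_mem_lieIdeal N ha (hτ.2.2 q)⟩,
      ⟨mul_mem hτ.1 ha, fun n hn => hτ.2.1 _ (apply_mem_lieIdeal N ha hn),
        fun q => hτ.2.2 _⟩⟩
    rw [Module.End.mul_apply, hτ.2.1 n hn, map_zero]
  have hJ_sq : ∀ τ ∈ J, ∀ σ ∈ J, τ * σ = 0 := fun τ hτ σ hσ =>
    LinearMap.ext fun q => hτ.2.1 _ (hσ.2.2 q)
  have hJ : J = ⊥ := hsp J ⟨fun τ hτ => hτ.1, hJ_ideal⟩ hJ_sq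
  simpa [hJ] using (show ν ∈ J from ⟨hν, hνN, hνQ⟩)

section Dense

variable {L : LieSubalgebra Φ Q} (hdense : IsDenseExtension Φ Q (L : Set Q))
  {S : Set Q} (hS : ∀ a ∈ (L : Set Q), ∀ y ∈ S, ⁅a, y⁆ ∈ S)
include hdense hS

lemma mul_ad_eq_zero {ν : Module.End Φ Q} (hν : ν ∈ MQ Φ Q) (hνS : ∀ y ∈ S, ν y = 0)
    {x : Q} (hx : x ∈ S) : ν * LieAlgebra.ad Φ Q x = 0 :=
  hdense _ (mul_mem hν (ad_mem x)) fun a ha => by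
    rw [Module.End.mul_apply, LieAlgebra.ad_apply, ← lie_skew, map_neg, hνS _ (hS a ha x hx),
      neg_zero]

lemma apply_eq_zero_of_mem_lieSpan {ν : Module.End Φ Q} (hν : ν ∈ MQ Φ Q)
    (hνS : ∀ y ∈ S, ν y = 0) {n : Q} (hn : n ∈ LieSubmodule.lieSpan Φ Q S) : ν n = 0 := by
  let K : LieIdeal Φ Q :=
    { carrier := {n | ∀ ρ ∈ MQ Φ Q, (∀ y ∈ S, ρ y = 0) → ρ n = 0}
      add_mem' := fun ha hb ρ hρ hρS => by rw [map_add, ha ρ hρ hρS, hb ρ hρ hρS, add_zero]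
      zero_mem' := fun ρ _ _ => map_zero ρ
      smul_mem' := fun c n hn ρ hρ hρS => by rw [map_smul, hn ρ hρ hρS, smul_zero]
      lie_mem := fun {q n} hn ρ hρ hρS => by
        have hρq : ∀ y ∈ S, (ρ * LieAlgebra.ad Φ Q q) y = 0 := fun y hy => by
          rw [Module.End.mul_apply, LieAlgebra.ad_apply, ← lie_skew, map_neg, neg_eq_zero]
          exact LinearMap.congr_fun (mul_ad_eq_zero hdense hS hρ hρS hy) q
        simpa using hn _ (mul_mem hρ (ad_mem q)) hρq }
  exact (LieSubmodule.lieSpan_le (N := K)).mpr (fun y hy ρ _ hρS => hρS y hy) hn ν hν hνS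

lemma apply_mem_ker_lieSpan (hsp : AssocSemiprimeOn Φ Q (MQ Φ Q)) {μ : Module.End Φ Q}
    (hμ : μ ∈ MQ Φ Q) (hμS : ∀ y ∈ S, μ y = 0) (q : Q) :
    μ q ∈ LieModule.ker Φ Q (LieSubmodule.lieSpan Φ Q S) := by
  rw [LieModule.mem_ker]
  rintro ⟨n, hn⟩
  have hadμ : LieAlgebra.ad Φ Q n * μ = 0 :=
    eq_zero_of_forall_apply_eq_zero_of_forall_apply_mem hsp _ (mul_mem (ad_mem n) hμ)
      (fun m hm => by
        rw [Module.End.mul_apply, apply_eq_zero_of_mem_lieSpan hdense hS hμ hμS hm, map_zero])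
      (fun q => lie_mem_left Φ Q _ _ _ hn)
  ext
  rw [LieSubmodule.coe_bracket, ← lie_skew, LieSubmodule.coe_zero, neg_eq_zero]
  exact LinearMap.congr_fun hadμ q

end Dense

end MQ

lemma LieIdeal.inf_ker_eq_bot {Φ : Type*} [CommRing Φ] {Q : Type*} [LieRing Q] [LieAlgebra Φ Q]
    (hsp : ∀ I : LieIdeal Φ Q, ⁅I, I⁆ = ⊥ → I = ⊥) (N : LieIdeal Φ Q) :
    N ⊓ LieModule.ker Φ Q N = ⊥ := by
  refine hsp _ ((LieSubmodule.lie_eq_bot_iff _ _).mpr fun x hx m hm => ?_)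
  have := (LieModule.mem_ker Φ Q N x).mp hx.2 ⟨m, hm.1⟩
  simpa using congrArg Subtype.val this

section Annihilator

variable {Φ : Type*} [CommRing Φ] {Q : Type*} [LieRing Q] [LieAlgebra Φ Q]

def lieAnnihilator (L : LieSubalgebra Φ Q) (I : Submodule Φ Q) : Submodule Φ Q where
  carrier := {a | a ∈ L ∧ ∀ y ∈ I, ⁅a, y⁆ = 0}
  add_mem' ha hb :=
    ⟨L.add_mem ha.1 hb.1, fun y hy => by rw [add_lie, ha.2 y hy, hb.2 y hy, add_zero]⟩
  zero_mem' := ⟨L.zero_mem, fun y _ => zero_lie y⟩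
  smul_mem' c a ha := ⟨L.smul_mem c ha.1, fun y hy => by rw [smul_lie, ha.2 y hy, smul_zero]⟩

lemma isIdealOf_lieAnnihilator {L : LieSubalgebra Φ Q} {I : Submodule Φ Q}
    (hI : ∀ x ∈ (L : Set Q), ∀ y ∈ I, ⁅x, y⁆ ∈ I) :
    IsIdealOf Φ Q (L : Set Q) (lieAnnihilator L I) :=
  ⟨fun _ ha => ha.1, fun b hb a ha => ⟨L.lie_mem hb ha.1, fun y hy => by
    rw [lie_lie, ha.2 y hy, ha.2 _ (hI b hb y hy), lie_zero, sub_zero]⟩⟩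

lemma annZero_of_isEssentialIdealOf {L : LieSubalgebra Φ Q}
    (hdense : IsDenseExtension Φ Q (L : Set Q))
    (hsp : ∀ I : LieIdeal Φ Q, ⁅I, I⁆ = ⊥ → I = ⊥) {I : Submodule Φ Q}
    (hI : IsEssentialIdealOf Φ Q (L : Set Q) I) : AnnZero Φ Q (L : Set Q) I := by
  intro w hw hwI
  by_contra hw0
  have hA : lieAnnihilator L I ≠ ⊥ := fun h =>
    hw0 <| (Submodule.mem_bot Φ).mp (h ▸ show w ∈ lieAnnihilator L I from ⟨hw, hwI⟩)
  obtain ⟨x, hxI, hxA, hx0⟩ := hI.2 _ (isIdealOf_lieAnnihilator hI.1.2) hA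
  let N := LieSubmodule.lieSpan Φ Q (I : Set Q)
  have hxN : x ∈ N := LieSubmodule.subset_lieSpan hxI
  have hxker : x ∈ LieModule.ker Φ Q N := by
    rw [LieModule.mem_ker]
    rintro ⟨n, hn⟩
    ext
    exact MQ.apply_eq_zero_of_mem_lieSpan hdense hI.1.2 (MQ.ad_mem x) hxA.2 hn
  have := (LieIdeal.inf_ker_eq_bot hsp N).le ⟨hxN, hxker⟩
  exact hx0 ((LieSubmodule.mem_bot x).mp this)

end Annihilator

/-- Let `L ⊆ Q` be a dense extension of Lie algebras with `Q` a
multiplicatively semiprime algebra of quotients of `L`.  Then `I ⊆ Q` is a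
dense extension for every essential ideal `I` of `L`. -/
theorem stmt16 {Φ : Type*} [CommRing Φ] {Q : Type*} [LieRing Q] [LieAlgebra Φ Q]
    (L : LieSubalgebra Φ Q)
    (hdense : IsDenseExtension Φ Q (L : Set Q))
    (hmsp : MultSemiprime Φ Q)
    (hquo : IsAlgebraOfQuotients Φ Q (L : Set Q)) :
    ∀ I : Submodule Φ Q, IsEssentialIdealOf Φ Q (L : Set Q) I →
      IsDenseExtension Φ Q (I : Set Q) := by
  intro I hI μ hμ hμI
  have hann := annZero_of_isEssentialIdealOf hdense hmsp.1 hI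
  let N := LieSubmodule.lieSpan Φ Q (I : Set Q)
  have hμN : ∀ q, μ q ∈ LieModule.ker Φ Q N :=
    MQ.apply_mem_ker_lieSpan hdense hI.1.2 hmsp.2 hμ hμI
  refine hdense μ hμ fun a ha => by_contra fun hμa => ?_
  obtain ⟨J, -, -, ⟨y, hyJ, hyμa⟩, hJq⟩ := hquo (μ a) hμa
  refine hyμa (hann _ (hJq y hyJ) fun x hx => ?_)
  have := (LieModule.mem_ker Φ Q N _).mp (lie_mem_right Φ Q _ y _ (hμN a))
    ⟨x, LieSubmodule.subset_lieSpan hx⟩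
  simpa using congrArg Subtype.val this
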